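/- Let a(τ) = ((√2 + 1)τ + 2)/(4τ(τ + 1)) and b(τ) = ((√2 − 1)τ − 2)/(4τ(τ + 1)), fix τ₀ > 2(√2 + 1), and let ψ : [τ₀, ∞) → ℝ be a differentiable solution of the Riccati equation dψ/dτ = b(τ) − a(τ)·ψ² with 1 − √2 ≤ ψ(τ) ≤ 0 for all τ ≥ τ₀. Then ψ(τ) tends to 1 − √2 as τ → ∞. -/

import Mathlib

open Filter

noncomputable def aR (τ : ℝ) : ℝ := ((Real.sqrt 2 + 1) * τ + 2) / (4 * τ * (τ + 1))
noncomputable def bR (τ : ℝ) : ℝ := ((Real.sqrt 2 - 1) * τ - 2) / (4 * τ * (τ + 1))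

/-!
If `ψ' = b − aψ²` were positive at some `τ₁`, then `ψ` would keep increasing: while
`ψ(τ₁) ≤ ψ ≤ 0` we have `ψ² ≤ ψ(τ₁)²`, and `b − aψ(τ₁)²` is a rational function of `τ`
whose numerator grows linearly, so `ψ' ≥ c/τ` for some `c > 0`. A log barrier then forces
`ψ → ∞`, contradicting `ψ ≤ 0`. Hence `aψ² ≥ b` throughout, i.e. `ψ ≤ −√(b/a)`, and
`b/a → (√2 − 1)²` squeezes `ψ` against the lower edge `1 − √2` of the strip at rate `O(1/τ)`.
-/

open Set Real

theorem add_mul_log_sub_le_of_hasDerivWithinAt {ψ ψ' : ℝ → ℝ} {t₁ c : ℝ} (ht₁ : 0 < t₁)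
    (hc : 0 ≤ c) (hψ : ∀ t, t₁ ≤ t → HasDerivWithinAt ψ (ψ' t) (Ici t₁) t)
    (hgrow : ∀ t, t₁ ≤ t → ψ t₁ ≤ ψ t → c / t < ψ' t) {t : ℝ} (ht : t₁ ≤ t) :
    ψ t₁ + c * (log t - log t₁) ≤ ψ t := by
  have hlog : ∀ x ∈ Ici t₁, HasDerivAt (fun x => ψ t₁ + c * (log x - log t₁)) (c / x) x :=
    fun x hx => by
      simpa [div_eq_mul_inv] using
        (((hasDerivAt_log (ht₁.trans_le hx).ne').sub_const (log t₁)).const_mul c).const_add (ψ t₁)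
  refine image_le_of_deriv_right_lt_deriv_boundary' (f' := fun x => c / x)
    (fun x hx => (hlog x hx.1).continuousAt.continuousWithinAt)
    (fun x hx => (hlog x hx.1).hasDerivWithinAt) (by simp)
    (fun x hx => (hψ x hx.1).continuousWithinAt.mono Icc_subset_Ici_self)
    (fun x hx => (hψ x hx.1).mono (Ici_subset_Ici.2 hx.1)) ?_ ⟨ht, le_rfl⟩
  intro x hx hx_eq
  refine hgrow x hx.1 (hx_eq ▸ le_add_of_nonneg_right ?_)
  exact mul_nonneg hc (sub_nonneg.2 (log_le_log ht₁ hx.1))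

theorem tendsto_atTop_of_hasDerivWithinAt_gt_div {ψ ψ' : ℝ → ℝ} {t₁ c : ℝ} (ht₁ : 0 < t₁)
    (hc : 0 < c) (hψ : ∀ t, t₁ ≤ t → HasDerivWithinAt ψ (ψ' t) (Ici t₁) t)
    (hgrow : ∀ t, t₁ ≤ t → ψ t₁ ≤ ψ t → c / t < ψ' t) : Tendsto ψ atTop atTop := by
  refine tendsto_atTop_mono' atTop
    ((eventually_ge_atTop t₁).mono fun t ht =>
      add_mul_log_sub_le_of_hasDerivWithinAt ht₁ hc.le hψ hgrow ht) ?_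
  exact tendsto_atTop_add_const_left _ _ <|
    (tendsto_atTop_add_const_right _ _ tendsto_log_atTop).const_mul_atTop hc

theorem aR_pos {t : ℝ} (ht : 0 < t) : 0 < aR t := by
  unfold aR; positivity

theorem bR_sub_aR_mul (t q : ℝ) :
    bR t - aR t * q = ((√2 - 1 - (√2 + 1) * q) * t - 2 * (1 + q)) / (4 * t * (t + 1)) := by
  unfold aR bR; ring

theorem exists_div_lt_bR_sub_aR_mul {τ₁ q : ℝ} (hτ₁ : 1 < τ₁) (hq : 0 ≤ q)
    (h : aR τ₁ * q < bR τ₁) : ∃ c > 0, ∀ t, τ₁ ≤ t → c / t < bR t - aR t * q := by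
  simp only [← sub_pos (b := aR _ * q), bR_sub_aR_mul] at h ⊢
  generalize √2 - 1 - (√2 + 1) * q = α at h ⊢
  set δ := α * τ₁ - 2 * (1 + q)
  have hδ : 0 < δ := (div_pos_iff_of_pos_right (by positivity)).1 h
  refine ⟨δ / (8 * τ₁), by positivity, fun t ht => ?_⟩
  have ht₀ : 0 < t := by linarith
  -- the numerator grows linearly: `τ₁ (α t - 2 (1 + q)) = t δ + 2 (1 + q) (t - τ₁)`
  have hlin : t * δ ≤ τ₁ * (α * t - 2 * (1 + q)) := by nlinarith
  rw [div_lt_div_iff₀ ht₀ (by positivity), div_mul_eq_mul_div, div_lt_iff₀ (by positivity)]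
  nlinarith [mul_lt_mul_of_pos_right (show t + 1 < 2 * t by linarith) hδ]

theorem le_one_sub_sqrt_two_add_of_bR_le {τ y : ℝ} (hτ : 0 < τ) (hy : 1 - √2 ≤ y) (hy₀ : y ≤ 0)
    (h : bR τ ≤ aR τ * y ^ 2) : y ≤ 1 - √2 + 3 / τ := by
  have hs : √2 ^ 2 = 2 := sq_sqrt zero_le_two
  rw [← sub_nonpos, bR_sub_aR_mul, div_le_iff₀ (by positivity), zero_mul] at h
  have hy₂ : (√2 + 1) * y ^ 2 ≤ -y := by
    nlinarith [mul_nonneg (sub_nonneg.2 hy) (neg_nonneg.2 hy₀)]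
  have hw : τ * (y - (1 - √2)) ≤ 3 := by
    nlinarith [mul_le_mul_of_nonneg_left hy₂ hτ.le]
  rw [← sub_le_iff_le_add', le_div_iff₀ hτ]
  linarith

theorem bR_le_aR_mul_sq_of_hasDerivWithinAt {τ₀ : ℝ} {ψ : ℝ → ℝ} (hτ₀ : 1 < τ₀)
    (hψ : ∀ τ, τ₀ ≤ τ → HasDerivWithinAt ψ (bR τ - aR τ * ψ τ ^ 2) (Ici τ₀) τ)
    (hψ₀ : ∀ τ, τ₀ ≤ τ → ψ τ ≤ 0) {τ₁ : ℝ} (hτ₁ : τ₀ ≤ τ₁) : bR τ₁ ≤ aR τ₁ * ψ τ₁ ^ 2 := by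
  by_contra! h
  have hτ₁pos : 0 < τ₁ := by linarith
  obtain ⟨c, hc, hgrow⟩ := exists_div_lt_bR_sub_aR_mul (hτ₀.trans_le hτ₁) (sq_nonneg _) h
  have hgrow' : ∀ t, τ₁ ≤ t → ψ τ₁ ≤ ψ t → c / t < bR t - aR t * ψ t ^ 2 := by
    intro t ht hle
    have hsq : ψ t ^ 2 ≤ ψ τ₁ ^ 2 := by nlinarith [hψ₀ t (hτ₁.trans ht)]
    nlinarith [hgrow t ht, mul_le_mul_of_nonneg_left hsq (aR_pos (hτ₁pos.trans_le ht)).le]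
  have hψ_top : Tendsto ψ atTop atTop :=
    tendsto_atTop_of_hasDerivWithinAt_gt_div hτ₁pos hc
      (fun t ht => (hψ t (hτ₁.trans ht)).mono (Ici_subset_Ici.2 hτ₁)) hgrow'
  obtain ⟨t, ht, hpos⟩ := ((eventually_ge_atTop τ₀).and (hψ_top.eventually_gt_atTop 0)).exists
  exact (hψ₀ t ht).not_gt hpos

/-- A solution of the Riccati equation `ψ' = b(τ) − a(τ)ψ²` staying in the
strip `1 − √2 ≤ ψ ≤ 0` on `[τ₀, ∞)` (with `τ₀ > 2(√2+1)`) tends to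
`1 − √2` at infinity. -/
theorem riccati_solution_in_D₂_tends_to_limit
    (τ₀ : ℝ) (hτ₀ : 2 * (Real.sqrt 2 + 1) < τ₀) (ψ : ℝ → ℝ)
    (hψ : ∀ τ : ℝ, τ₀ ≤ τ →
      HasDerivWithinAt ψ (bR τ - aR τ * ψ τ ^ 2) (Set.Ici τ₀) τ)
    (hbounds : ∀ τ : ℝ, τ₀ ≤ τ → 1 - Real.sqrt 2 ≤ ψ τ ∧ ψ τ ≤ 0) :
    Tendsto ψ atTop (nhds (1 - Real.sqrt 2)) := by
  have hτ₀' : 1 < τ₀ := by nlinarith [sqrt_nonneg 2]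
  have hupper : ∀ᶠ τ in atTop, ψ τ ≤ 1 - √2 + 3 / τ :=
    (eventually_ge_atTop τ₀).mono fun τ hτ =>
      le_one_sub_sqrt_two_add_of_bR_le (by linarith) (hbounds τ hτ).1 (hbounds τ hτ).2
        (bR_le_aR_mul_sq_of_hasDerivWithinAt hτ₀' hψ (fun τ hτ => (hbounds τ hτ).2) hτ)
  have hlim : Tendsto (fun τ : ℝ => 1 - √2 + 3 / τ) atTop (nhds (1 - √2)) := by
    simpa using (tendsto_const_nhds (x := (1 : ℝ) - √2)).add
      ((tendsto_const_nhds (x := (3 : ℝ))).div_atTop tendsto_id)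
  exact tendsto_of_tendsto_of_tendsto_of_le_of_le' tendsto_const_nhds hlim
    ((eventually_ge_atTop τ₀).mono fun τ hτ => (hbounds τ hτ).1) hupper
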